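/- Let 𝒟 be a triangulated category with a (bounded, nondegenerate) t-structure whose heart 𝒞 is semisimple, and let r : D^b(𝒞) → 𝒟 be a t-exact functor inducing the identity on 𝒞. If Hom_𝒟(M, N[i]) = 0 for all M, N in 𝒞 and all i ≠ 0, then r is an equivalence of t-categories. -/

import Mathlib

open CategoryTheory CategoryTheory.Limits CategoryTheory.Pretriangulated
  CategoryTheory.Triangulated

set_option linter.unusedSectionVars false
set_option maxHeartbeats 1000000

section Aux
variable {A : Type*} [Category A] [Preadditive A] [HasZeroObject A] [HasShift A ℤ]
  [∀ n : ℤ, (shiftFunctor A n).Additive] [Pretriangulated A]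

lemma auxZero11 (t : TStructure A) {X Y : A} (f : X ⟶ Y) (n : ℤ)
    (hX : t.le n X) (hY : t.ge (n + 1) Y) : f = 0 := by
  apply (shiftFunctor A n).map_injective
  rw [Functor.map_zero]
  exact t.zero' ((shiftFunctor A n).map f)
    (t.le_shift n n 0 (by omega) X hX) (t.ge_shift (n + 1) n 1 (by omega) Y hY)

lemma auxShiftZero11 (P Q : A)
    (h : ∀ (i : ℤ), i ≠ 0 → ∀ f : P ⟶ Q⟦i⟧, f = 0) (a b : ℤ) (hab : a ≠ b)
    (f : P⟦a⟧ ⟶ Q⟦b⟧) : f = 0 := by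
  apply (shiftFunctor A (-a)).map_injective
  rw [Functor.map_zero]
  set e₁ := (shiftFunctorCompIsoId A a (-a) (by omega)).app P
  set e₂ := (shiftFunctorAdd' A b (-a) (b - a) (by omega)).symm.app Q
  have key : (shiftFunctor A (-a)).map f
      = e₁.hom ≫ (e₁.inv ≫ (shiftFunctor A (-a)).map f ≫ e₂.hom) ≫ e₂.inv := by simp
  rw [key, h (b - a) (by omega) (e₁.inv ≫ (shiftFunctor A (-a)).map f ≫ e₂.hom)]
  simp

lemma auxLEExt11 (t : TStructure A) (T : Triangle A) (hT : T ∈ distTriang A) (n : ℤ)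
    (h₁ : t.le n T.obj₁) (h₃ : t.le n T.obj₃) : t.le n T.obj₂ := by
  obtain ⟨B₁, B₂, hB₁, hB₂, f, g, h, mem⟩ := t.exists_triangle T.obj₂ n (n + 1) rfl
  have hg : g = 0 := by
    obtain ⟨w, hw⟩ := Triangle.yoneda_exact₂ T hT g (auxZero11 t _ n h₁ hB₂)
    rw [hw, auxZero11 t w n h₃ hB₂, comp_zero]
  have hB₂zero : IsZero B₂ := by
    obtain ⟨φ, hφ⟩ := Triangle.yoneda_exact₃ (Triangle.mk f g h) mem (𝟙 B₂)
      (by change g ≫ 𝟙 B₂ = 0; rw [hg, zero_comp])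
    rw [IsZero.iff_id_eq_zero, hφ,
      auxZero11 t φ (n - 1) (t.le_shift n 1 (n - 1) (by omega) B₁ hB₁)
        (t.ge_antitone (by omega) _ hB₂), comp_zero]; rfl
  have : IsIso (Triangle.mk f g h).mor₁ :=
    (Triangle.isZero₃_iff_isIso₁ _ mem).1 hB₂zero
  exact (t.le n).prop_of_iso (@asIso _ _ _ _ (Triangle.mk f g h).mor₁ this) hB₁

lemma auxGEExt11 (t : TStructure A) (T : Triangle A) (hT : T ∈ distTriang A) (n : ℤ)
    (h₁ : t.ge n T.obj₁) (h₃ : t.ge n T.obj₃) : t.ge n T.obj₂ := by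
  obtain ⟨B₁, B₂, hB₁, hB₂, f, g, h, mem⟩ := t.exists_triangle T.obj₂ (n - 1) n (by omega)
  have hf : f = 0 := by
    obtain ⟨w, hw⟩ := Triangle.coyoneda_exact₂ T hT f
      (auxZero11 t _ (n - 1) hB₁ (by simpa using h₃))
    rw [hw, auxZero11 t w (n - 1) hB₁ (by simpa using h₁), zero_comp]
  have hB₁zero : IsZero B₁ := by
    obtain ⟨φ, hφ⟩ := Triangle.coyoneda_exact₂ (Triangle.mk f g h).invRotate
      (inv_rot_of_distTriang _ mem) (𝟙 B₁) (by change 𝟙 B₁ ≫ f = 0; rw [hf, comp_zero])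
    rw [IsZero.iff_id_eq_zero, hφ,
      auxZero11 t φ (n - 1) hB₁
        (t.ge_antitone (by omega) _ (t.ge_shift n (-1) (n + 1) (by omega) _ hB₂)), zero_comp]; rfl
  have : IsIso (Triangle.mk f g h).mor₂ :=
    (Triangle.isZero₁_iff_isIso₂ _ mem).1 hB₁zero
  exact (t.ge n).prop_of_iso (@asIso _ _ _ _ (Triangle.mk f g h).mor₂ this).symm hB₂

lemma auxHeart11 (t : TStructure A) {H : Type*} [Category H] (ι : H ⥤ A)
    (hheart : ∀ X : A, (t.le 0 X ∧ t.ge 0 X) ↔ ∃ M : H, Nonempty (ι.obj M ≅ X))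
    (X : A) (n : ℤ) (hGE : t.ge n X) (hLE : t.le n X) :
    ∃ M : H, Nonempty ((ι.obj M)⟦-n⟧ ≅ X) := by
  obtain ⟨M, ⟨e⟩⟩ := (hheart (X⟦n⟧)).1
    ⟨t.le_shift n n 0 (by omega) X hLE, t.ge_shift n n 0 (by omega) X hGE⟩
  exact ⟨M, ⟨(shiftFunctor A (-n)).mapIso e ≪≫
    (shiftFunctorCompIsoId A n (-n) (by omega)).app X⟩⟩

end Aux


section Aux2
variable {A : Type*} [Category A] [Preadditive A] [HasZeroObject A] [HasShift A ℤ]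
  [∀ n : ℤ, (shiftFunctor A n).Additive] [Pretriangulated A]
  {B : Type*} [Category B] [Preadditive B] [HasZeroObject B] [HasShift B ℤ]
  [∀ n : ℤ, (shiftFunctor B n).Additive] [Pretriangulated B]

/-- the comparison map on Hom-sets is bijective -/
def RMapBij11 (r : A ⥤ B) (X Y : A) : Prop :=
  Function.Bijective (fun f : X ⟶ Y => r.map f)

lemma rbijIso11 (r : A ⥤ B) {X X' Y Y' : A} (eX : X' ≅ X) (eY : Y ≅ Y')
    (h : RMapBij11 r X Y) : RMapBij11 r X' Y' := by
  have key : (fun f : X' ⟶ Y' => r.map f)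
      = (Iso.homCongr (r.mapIso eX).symm (r.mapIso eY))
        ∘ (fun f : X ⟶ Y => r.map f) ∘ (Iso.homCongr eX eY.symm) := by
    funext f
    simp [Iso.homCongr]
  rw [RMapBij11, key]
  exact (Equiv.bijective _).comp (h.comp (Equiv.bijective _))

lemma rbijShift11 (r : A ⥤ B) [r.CommShift ℤ] (X Y : A) (a : ℤ)
    (h : RMapBij11 r X Y) : RMapBij11 r (X⟦a⟧) (Y⟦a⟧) := by
  have hpre : Function.Bijective (fun f : X⟦a⟧ ⟶ Y⟦a⟧ => (shiftFunctor A a).preimage f) := by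
    rw [Function.bijective_iff_has_inverse]
    exact ⟨fun f => (shiftFunctor A a).map f,
      fun f => (shiftFunctor A a).map_preimage f, fun f => (shiftFunctor A a).preimage_map f⟩
  have hmap : Function.Bijective (fun g : r.obj X ⟶ r.obj Y => (shiftFunctor B a).map g) :=
    ⟨(shiftFunctor B a).map_injective, (shiftFunctor B a).map_surjective⟩
  have key : (fun f : X⟦a⟧ ⟶ Y⟦a⟧ => r.map f)
      = (Iso.homCongr ((r.commShiftIso a).app X).symm ((r.commShiftIso a).app Y).symm)
        ∘ (fun g : r.obj X ⟶ r.obj Y => (shiftFunctor B a).map g)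
        ∘ (fun f : X ⟶ Y => r.map f)
        ∘ (fun f : X⟦a⟧ ⟶ Y⟦a⟧ => (shiftFunctor A a).preimage f) := by
    funext f
    conv_lhs => rw [← (shiftFunctor A a).map_preimage f]
    have := (r.commShiftIso a).hom.naturality ((shiftFunctor A a).preimage f)
    dsimp at this
    simp only [Function.comp_apply, Iso.homCongr_apply, Iso.symm_inv, Iso.symm_hom,
      Iso.app_hom, Iso.app_inv]
    rw [← Category.assoc, ← this]
    simp
  rw [RMapBij11, key]
  exact (Equiv.bijective _).comp (hmap.comp (h.comp hpre))

lemma rbijFL2 (r : A ⥤ B) [r.CommShift ℤ] [r.IsTriangulated]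
    (X : A) (T : Triangle A) (hT : T ∈ distTriang A)
    (h₁ : RMapBij11 r X T.obj₁) (h₃ : RMapBij11 r X T.obj₃)
    (h₁' : RMapBij11 r X (T.obj₁⟦(1 : ℤ)⟧)) (h₃' : RMapBij11 r X (T.obj₃⟦(-1 : ℤ)⟧)) :
    RMapBij11 r X T.obj₂ := by
  have hRT := r.map_distinguished T hT
  have hRT' := r.map_distinguished T.invRotate (inv_rot_of_distTriang T hT)
  constructor
  · intro f₁ f₂ hf
    suffices h : ∀ f : X ⟶ T.obj₂, r.map f = 0 → f = 0 by
      have := h (f₁ - f₂) (by rw [r.map_sub]; dsimp at hf; rw [hf, sub_self])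
      rwa [sub_eq_zero] at this
    intro f hf
    have hf2 : f ≫ T.mor₂ = 0 := by
      apply h₃.injective
      dsimp
      rw [r.map_comp, hf, zero_comp, r.map_zero]
    obtain ⟨g₁, rfl⟩ := Triangle.coyoneda_exact₂ T hT f hf2
    have hg₁ : r.map g₁ ≫ r.map ((T.invRotate).mor₂) = 0 := by
      erw [← r.map_comp]
      have : (T.invRotate).mor₂ = T.mor₁ := rfl
      erw [this, hf]; rfl
    obtain ⟨h', hh'⟩ := Triangle.coyoneda_exact₂ (r.mapTriangle.obj T.invRotate) hRT'
      (r.map g₁) (by exact hg₁)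
    obtain ⟨h'', rfl⟩ := h₃'.surjective h'
    dsimp at hh'
    erw [← r.map_comp] at hh'
    have : g₁ = h'' ≫ (T.invRotate).mor₁ := h₁.injective hh'
    erw [this, Category.assoc]
    have z : (T.invRotate).mor₁ ≫ T.mor₁ = 0 :=
      comp_distTriang_mor_zero₁₂ T.invRotate (inv_rot_of_distTriang T hT)
    erw [z, comp_zero]
  · intro g
    obtain ⟨f₃, hf₃⟩ := h₃.surjective (g ≫ r.map T.mor₂)
    replace hf₃ : r.map f₃ = g ≫ r.map T.mor₂ := hf₃
    have hz : f₃ ≫ T.mor₃ = 0 := by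
      apply h₁'.injective
      dsimp
      rw [r.map_comp, hf₃, r.map_zero, Category.assoc, ← r.map_comp,
        comp_distTriang_mor_zero₂₃ T hT, r.map_zero, comp_zero]
    obtain ⟨f₂, rfl⟩ := Triangle.coyoneda_exact₃ T hT f₃ hz
    have hz2 : (g - r.map f₂) ≫ r.map T.mor₂ = 0 := by
      rw [Preadditive.sub_comp, ← r.map_comp, ← hf₃, sub_self]
    obtain ⟨h', hh'⟩ := Triangle.coyoneda_exact₂ (r.mapTriangle.obj T) hRT
      (g - r.map f₂) (by exact hz2)
    obtain ⟨f₁, rfl⟩ := h₁.surjective h'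
    dsimp at hh'
    refine ⟨f₂ + f₁ ≫ T.mor₁, ?_⟩
    dsimp
    erw [r.map_add, r.map_comp, ← hh']
    abel

lemma rbijFL1 (r : A ⥤ B) [r.CommShift ℤ] [r.IsTriangulated]
    (Y : A) (T : Triangle A) (hT : T ∈ distTriang A)
    (h₁ : RMapBij11 r T.obj₁ Y) (h₃ : RMapBij11 r T.obj₃ Y)
    (h₁' : RMapBij11 r (T.obj₁⟦(1 : ℤ)⟧) Y) (h₃' : RMapBij11 r (T.obj₃⟦(-1 : ℤ)⟧) Y) :
    RMapBij11 r T.obj₂ Y := by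
  have hRT := r.map_distinguished T hT
  have hRT' := r.map_distinguished T.invRotate (inv_rot_of_distTriang T hT)
  constructor
  · intro f₁ f₂ hf
    suffices h : ∀ f : T.obj₂ ⟶ Y, r.map f = 0 → f = 0 by
      have := h (f₁ - f₂) (by rw [r.map_sub]; dsimp at hf; rw [hf, sub_self])
      rwa [sub_eq_zero] at this
    intro f hf
    have hf1 : T.mor₁ ≫ f = 0 := by
      apply h₁.injective
      dsimp
      rw [r.map_comp, hf, comp_zero, r.map_zero]
    obtain ⟨g, rfl⟩ := Triangle.yoneda_exact₂ T hT f hf1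
    have hg : (r.mapTriangle.obj T).mor₂ ≫ r.map g = 0 := by
      exact (r.map_comp _ _).symm.trans hf
    obtain ⟨h', hh'⟩ := Triangle.yoneda_exact₃ (r.mapTriangle.obj T) hRT (r.map g) hg
    -- h' : (r.obj T.obj₁)⟦1⟧ ⟶ r.obj Y ; conjugate by commShiftIso
    obtain ⟨u, hu⟩ := h₁'.surjective (((r.commShiftIso (1 : ℤ)).app T.obj₁).hom ≫ h')
    dsimp only at hu
    have : r.map g = r.map (T.mor₃ ≫ u) := by
      rw [r.map_comp, hu, hh']
      dsimp
      exact Category.assoc _ _ _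
    have hgu : g = T.mor₃ ≫ u := h₃.injective this
    rw [hgu, ← Category.assoc, comp_distTriang_mor_zero₂₃ T hT, zero_comp]
  · intro g
    obtain ⟨u, hu⟩ := h₁.surjective (r.map T.mor₁ ≫ g)
    dsimp only at hu
    have hz : (T.invRotate).mor₁ ≫ u = 0 := by
      apply h₃'.injective
      have h2 : (T.invRotate).mor₂ = T.mor₁ := rfl
      have hz0 : (T.invRotate).mor₁ ≫ (T.invRotate).mor₂ = 0 :=
        comp_distTriang_mor_zero₁₂ T.invRotate (inv_rot_of_distTriang T hT)
      show r.map (T.invRotate.mor₁ ≫ u) = r.map 0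
      erw [r.map_comp, hu, ← Category.assoc, ← r.map_comp, ← h2, hz0, r.map_zero,
        zero_comp, r.map_zero]
    obtain ⟨v0, hv0⟩ := Triangle.yoneda_exact₂ T.invRotate (inv_rot_of_distTriang T hT) u hz
    obtain ⟨v', hv'⟩ : ∃ v : T.obj₂ ⟶ Y, u = T.mor₁ ≫ v := ⟨v0, hv0⟩
    have hz2 : (r.mapTriangle.obj T).mor₁ ≫ (g - r.map v') = 0 := by
      show r.map T.mor₁ ≫ (g - r.map v') = 0
      erw [Preadditive.comp_sub, ← r.map_comp, ← hv', hu, sub_self]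
    obtain ⟨w, hw⟩ := Triangle.yoneda_exact₂ (r.mapTriangle.obj T) hRT (g - r.map v') hz2
    obtain ⟨w', rfl⟩ := h₃.surjective w
    dsimp at hw
    refine ⟨v' + T.mor₂ ≫ w', ?_⟩
    dsimp
    erw [r.map_add, r.map_comp, ← hw]
    abel

end Aux2


/-- Let `C` be a semisimple abelian category, `E` a triangulated category with a
bounded nondegenerate t-structure `tE` with heart `C` (via `ιE`) such that
`Hom_E(M, N[i]) = 0` for `M, N` in the heart and `i ≠ 0` (so `E` plays the role
of `D^b(C)`), and let `D` be a triangulated category with a bounded nondegenerate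
t-structure `tD` whose heart is also `C` (via `ιD`). If `r : E ⥤ D` is a
t-exact triangulated functor inducing the identity on `C`, and if
`Hom_D(M, N[i]) = 0` for all `M, N` in `C` and `i ≠ 0`, then `r` is an
equivalence of (t-)categories. -/
theorem stmt11
    (C : Type*) [Category C] [Abelian C]
    (hss : ∀ (X Y : C) (f : X ⟶ Y), Mono f → ∃ g : Y ⟶ X, f ≫ g = 𝟙 X)
    (E : Type*) [Category E] [Preadditive E] [HasZeroObject E] [HasShift E ℤ]
    [∀ n : ℤ, (shiftFunctor E n).Additive] [Pretriangulated E]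
    (D : Type*) [Category D] [Preadditive D] [HasZeroObject D] [HasShift D ℤ]
    [∀ n : ℤ, (shiftFunctor D n).Additive] [Pretriangulated D]
    (tE : TStructure E) (tD : TStructure D)
    -- both t-structures are bounded …
    (hEbdd : ∀ X : E, ∃ a b : ℤ, tE.ge a X ∧ tE.le b X)
    (hDbdd : ∀ X : D, ∃ a b : ℤ, tD.ge a X ∧ tD.le b X)
    -- … and nondegenerate
    (hEnondeg₁ : ∀ X : E, (∀ n : ℤ, tE.le n X) → IsZero X)
    (hEnondeg₂ : ∀ X : E, (∀ n : ℤ, tE.ge n X) → IsZero X)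
    (hDnondeg₁ : ∀ X : D, (∀ n : ℤ, tD.le n X) → IsZero X)
    (hDnondeg₂ : ∀ X : D, (∀ n : ℤ, tD.ge n X) → IsZero X)
    -- `C` is the heart of `tE` and of `tD`
    (ιE : C ⥤ E) [ιE.Full] [ιE.Faithful]
    (hheartE : ∀ X : E, (tE.le 0 X ∧ tE.ge 0 X) ↔ ∃ M : C, Nonempty (ιE.obj M ≅ X))
    (ιD : C ⥤ D) [ιD.Full] [ιD.Faithful]
    (hheartD : ∀ X : D, (tD.le 0 X ∧ tD.ge 0 X) ↔ ∃ M : C, Nonempty (ιD.obj M ≅ X))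
    -- `E` is `D^b(C)`: by semisimplicity, `Hom_E(M, N[i]) ≅ Ext^i_C(M,N) = 0` for `i ≠ 0`
    (hE : ∀ (M N : C) (i : ℤ), i ≠ 0 → ∀ f : ιE.obj M ⟶ (ιE.obj N)⟦i⟧, f = 0)
    -- `r` is a t-exact triangulated functor inducing the identity on `C`
    (r : E ⥤ D) [r.CommShift ℤ] [r.IsTriangulated]
    (hLE : ∀ (n : ℤ) (X : E), tE.le n X → tD.le n (r.obj X))
    (hGE : ∀ (n : ℤ) (X : E), tE.ge n X → tD.ge n (r.obj X))
    (hr : ιE ⋙ r ≅ ιD)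
    -- hypothesis: `Hom_D(M, N[i]) = 0` for `M, N` in `C` and `i ≠ 0`
    (hD : ∀ (M N : C) (i : ℤ), i ≠ 0 → ∀ f : ιD.obj M ⟶ (ιD.obj N)⟦i⟧, f = 0) :
    r.IsEquivalence := by
  -- vanishing between distinct shifts of heart objects, in E
  have AzeroE : ∀ (M N : C) (a b : ℤ), a ≠ b → ∀ f : (ιE.obj M)⟦a⟧ ⟶ (ιE.obj N)⟦b⟧, f = 0 :=
    fun M N a b hab f =>
      auxShiftZero11 (ιE.obj M) (ιE.obj N) (fun i hi => hE M N i hi) a b hab f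
  -- vanishing between images of distinct shifts of heart objects, in D
  have AzeroD : ∀ (M N : C) (a b : ℤ), a ≠ b →
      ∀ g : r.obj ((ιE.obj M)⟦a⟧) ⟶ r.obj ((ιE.obj N)⟦b⟧), g = 0 := by
    intro M N a b hab g
    set i₁ : (ιD.obj M)⟦a⟧ ≅ r.obj ((ιE.obj M)⟦a⟧) :=
      (shiftFunctor D a).mapIso (hr.app M).symm ≪≫ ((r.commShiftIso a).app (ιE.obj M)).symm
      with hi₁
    set i₂ : (ιD.obj N)⟦b⟧ ≅ r.obj ((ιE.obj N)⟦b⟧) :=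
      (shiftFunctor D b).mapIso (hr.app N).symm ≪≫ ((r.commShiftIso b).app (ιE.obj N)).symm
      with hi₂
    have h0 : i₁.hom ≫ g ≫ i₂.inv = 0 :=
      auxShiftZero11 (ιD.obj M) (ιD.obj N) (fun i hi => hD M N i hi) a b hab _
    calc g = i₁.inv ≫ (i₁.hom ≫ g ≫ i₂.inv) ≫ i₂.hom := by simp
    _ = 0 := by rw [h0]; simp
  -- the comparison is bijective on the heart
  have Aheart : ∀ M N : C, RMapBij11 r (ιE.obj M) (ιE.obj N) := by
    intro M N
    have hpre : Function.Bijective (fun f : ιE.obj M ⟶ ιE.obj N => ιE.preimage f) := by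
      rw [Function.bijective_iff_has_inverse]
      exact ⟨fun u => ιE.map u, fun f => ιE.map_preimage f, fun u => ιE.preimage_map u⟩
    have hmap : Function.Bijective (fun u : M ⟶ N => ιD.map u) :=
      ⟨ιD.map_injective, ιD.map_surjective⟩
    have key : (fun f : ιE.obj M ⟶ ιE.obj N => r.map f)
        = (Iso.homCongr (hr.app M) (hr.app N)).symm
          ∘ (fun u : M ⟶ N => ιD.map u) ∘ (fun f => ιE.preimage f) := by
      funext f
      conv_lhs => rw [← ιE.map_preimage f]
      have := hr.hom.naturality (ιE.preimage f)
      dsimp at this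
      simp only [Function.comp_apply, Iso.homCongr_symm, Iso.homCongr_apply, Iso.symm_inv, Iso.symm_hom, Iso.app_hom, Iso.app_inv]
      rw [← Category.assoc, ← this]
      simp
    rw [RMapBij11, key]
    exact (Equiv.bijective _).comp (hmap.comp hpre)
  -- the comparison is bijective on shifts of heart objects
  have Ashift : ∀ (M N : C) (a b : ℤ), RMapBij11 r ((ιE.obj M)⟦a⟧) ((ιE.obj N)⟦b⟧) := by
    intro M N a b
    by_cases hab : a = b
    · subst hab
      exact rbijShift11 r _ _ a (Aheart M N)
    · constructor
      · intro f₁ f₂ _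
        rw [AzeroE M N a b hab f₁, AzeroE M N a b hab f₂]
      · intro g
        refine ⟨0, ?_⟩
        show r.map 0 = g
        rw [r.map_zero, AzeroD M N a b hab g]
  -- one-variable dévissage (second variable)
  have baseY : ∀ (Y : E) (n : ℤ), tE.ge n Y → tE.le n Y →
      ∀ (M : C) (c : ℤ), RMapBij11 r ((ιE.obj M)⟦c⟧) Y := by
    intro Y n hGE' hLE' M c
    obtain ⟨N, ⟨e⟩⟩ := auxHeart11 tE ιE hheartE Y n hGE' hLE'
    exact rbijIso11 r (Iso.refl _) e (Ashift M N c (-n))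
  have mainB : ∀ (n : ℕ) (Y : E) (a : ℤ), tE.ge a Y → tE.le (a + n) Y →
      ∀ (M : C) (c : ℤ), RMapBij11 r ((ιE.obj M)⟦c⟧) Y := by
    intro n
    induction n with
    | zero =>
      intro Y a hGE' hLE' M c
      exact baseY Y a hGE' (by simpa using hLE') M c
    | succ n ih =>
      intro Y a hGE' hLE' M c
      obtain ⟨Y₁, Y₂, hY₁, hY₂, u, v, w, mem⟩ := tE.exists_triangle Y (a + n) (a + n + 1) rfl
      have hLE'' : tE.le (a + n + 1) Y := by
        rwa [show a + ((n + 1 : ℕ) : ℤ) = a + n + 1 by push_cast; ring] at hLE'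
      have hY₁GE : tE.ge a Y₁ := by
        refine auxGEExt11 tE (Triangle.mk u v w).invRotate (inv_rot_of_distTriang _ mem) a ?_ ?_
        · exact tE.ge_antitone (show a ≤ a + n + 2 by omega) _
            (tE.ge_shift (a + n + 1) (-1) (a + n + 2) (by omega) _ hY₂)
        · exact hGE'
      have hY₂LE : tE.le (a + n + 1) Y₂ := by
        refine auxLEExt11 tE (Triangle.mk u v w).rotate (rot_of_distTriang _ mem) (a + n + 1) ?_ ?_
        · exact hLE''
        · exact tE.le_monotone (show a + n - 1 ≤ a + n + 1 by omega) _
            (tE.le_shift (a + n) 1 (a + n - 1) (by omega) _ hY₁)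
      refine rbijFL2 r _ (Triangle.mk u v w) mem ?_ ?_ ?_ ?_
      · exact ih Y₁ a hY₁GE hY₁ M c
      · exact baseY Y₂ (a + n + 1) hY₂ hY₂LE M c
      · refine ih (Y₁⟦(1 : ℤ)⟧) (a - 1) (tE.ge_shift a 1 (a - 1) (by omega) _ hY₁GE) ?_ M c
        have := tE.le_shift (a + n) 1 (a + n - 1) (by omega) _ hY₁
        rwa [show a - 1 + (n : ℤ) = a + n - 1 by ring]
      · exact baseY (Y₂⟦(-1 : ℤ)⟧) (a + n + 2)
          (tE.ge_shift (a + n + 1) (-1) (a + n + 2) (by omega) _ hY₂)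
          (tE.le_shift (a + n + 1) (-1) (a + n + 2) (by omega) _ hY₂LE) M c
  -- bijectivity for X of width 0 against all Y
  have base0 : ∀ (X : E) (c : ℤ), tE.ge c X → tE.le c X → ∀ Y : E, RMapBij11 r X Y := by
    intro X c hGE' hLE' Y
    obtain ⟨M, ⟨e⟩⟩ := auxHeart11 tE ιE hheartE X c hGE' hLE'
    obtain ⟨a', b', hGE'', hLE''⟩ := hEbdd Y
    have hb : b' ≤ a' + ((b' - a').toNat : ℤ) := by
      have := Int.self_le_toNat (b' - a'); omega
    have := mainB (b' - a').toNat Y a' hGE'' (tE.le_monotone hb _ hLE'') M (-c)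
    exact rbijIso11 r e.symm (Iso.refl Y) this
  -- full dévissage
  have main2 : ∀ (n : ℕ) (X : E) (a : ℤ), tE.ge a X → tE.le (a + n) X →
      ∀ Y : E, RMapBij11 r X Y := by
    intro n
    induction n with
    | zero =>
      intro X a hGE' hLE' Y
      exact base0 X a hGE' (by simpa using hLE') Y
    | succ n ih =>
      intro X a hGE' hLE' Y
      obtain ⟨X₁, X₂, hX₁, hX₂, u, v, w, mem⟩ := tE.exists_triangle X (a + n) (a + n + 1) rfl
      have hLE'' : tE.le (a + n + 1) X := by
        rwa [show a + ((n + 1 : ℕ) : ℤ) = a + n + 1 by push_cast; ring] at hLE'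
      have hX₁GE : tE.ge a X₁ := by
        refine auxGEExt11 tE (Triangle.mk u v w).invRotate (inv_rot_of_distTriang _ mem) a ?_ ?_
        · exact tE.ge_antitone (show a ≤ a + n + 2 by omega) _
            (tE.ge_shift (a + n + 1) (-1) (a + n + 2) (by omega) _ hX₂)
        · exact hGE'
      have hX₂LE : tE.le (a + n + 1) X₂ := by
        refine auxLEExt11 tE (Triangle.mk u v w).rotate (rot_of_distTriang _ mem) (a + n + 1) ?_ ?_
        · exact hLE''
        · exact tE.le_monotone (show a + n - 1 ≤ a + n + 1 by omega) _
            (tE.le_shift (a + n) 1 (a + n - 1) (by omega) _ hX₁)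
      refine rbijFL1 r Y (Triangle.mk u v w) mem ?_ ?_ ?_ ?_
      · exact ih X₁ a hX₁GE hX₁ Y
      · exact base0 X₂ (a + n + 1) hX₂ hX₂LE Y
      · refine ih (X₁⟦(1 : ℤ)⟧) (a - 1) (tE.ge_shift a 1 (a - 1) (by omega) _ hX₁GE) ?_ Y
        have := tE.le_shift (a + n) 1 (a + n - 1) (by omega) _ hX₁
        rwa [show a - 1 + (n : ℤ) = a + n - 1 by ring]
      · exact base0 (X₂⟦(-1 : ℤ)⟧) (a + n + 2)
          (tE.ge_shift (a + n + 1) (-1) (a + n + 2) (by omega) _ hX₂)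
          (tE.le_shift (a + n + 1) (-1) (a + n + 2) (by omega) _ hX₂LE) Y
  -- full faithfulness
  have hff : ∀ (X Y : E), Function.Bijective (fun f : X ⟶ Y => r.map f) := by
    intro X Y
    obtain ⟨a, b, hGE', hLE'⟩ := hEbdd X
    have hb : b ≤ a + ((b - a).toNat : ℤ) := by
      have := Int.self_le_toNat (b - a); omega
    exact main2 (b - a).toNat X a hGE' (tE.le_monotone hb _ hLE') Y
  haveI hFull : r.Full := { map_surjective := fun {X Y} => (hff X Y).surjective }
  haveI hFaithful : r.Faithful := { map_injective := fun {X Y} => (hff X Y).injective }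
  -- essential surjectivity
  have base0D : ∀ (Z : D) (c : ℤ), tD.ge c Z → tD.le c Z →
      ∃ X : E, Nonempty (r.obj X ≅ Z) := by
    intro Z c hGE' hLE'
    obtain ⟨M, ⟨e⟩⟩ := auxHeart11 tD ιD hheartD Z c hGE' hLE'
    exact ⟨(ιE.obj M)⟦(-c : ℤ)⟧, ⟨(r.commShiftIso (-c)).app (ιE.obj M) ≪≫
      (shiftFunctor D (-c)).mapIso (hr.app M) ≪≫ e⟩⟩
  have mainD : ∀ (n : ℕ) (Z : D) (a : ℤ), tD.ge a Z → tD.le (a + n) Z →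
      ∃ X : E, Nonempty (r.obj X ≅ Z) := by
    intro n
    induction n with
    | zero =>
      intro Z a h1 h2
      exact base0D Z a h1 (by simpa using h2)
    | succ n ih =>
      intro Z a hGE' hLE'
      obtain ⟨Z₁, Z₂, hZ₁, hZ₂, u, v, w, mem⟩ := tD.exists_triangle Z (a + n) (a + n + 1) rfl
      have hLE'' : tD.le (a + n + 1) Z := by
        rwa [show a + ((n + 1 : ℕ) : ℤ) = a + n + 1 by push_cast; ring] at hLE'
      have hZ₁GE : tD.ge a Z₁ := by
        refine auxGEExt11 tD (Triangle.mk u v w).invRotate (inv_rot_of_distTriang _ mem) a ?_ ?_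
        · exact tD.ge_antitone (show a ≤ a + n + 2 by omega) _
            (tD.ge_shift (a + n + 1) (-1) (a + n + 2) (by omega) _ hZ₂)
        · exact hGE'
      have hZ₂LE : tD.le (a + n + 1) Z₂ := by
        refine auxLEExt11 tD (Triangle.mk u v w).rotate (rot_of_distTriang _ mem) (a + n + 1) ?_ ?_
        · exact hLE''
        · exact tD.le_monotone (show a + n - 1 ≤ a + n + 1 by omega) _
            (tD.le_shift (a + n) 1 (a + n - 1) (by omega) _ hZ₁)
      obtain ⟨X₁, ⟨e₁⟩⟩ := ih Z₁ a hZ₁GE hZ₁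
      obtain ⟨X₂, ⟨e₂⟩⟩ := base0D Z₂ (a + n + 1) hZ₂ hZ₂LE
      set i₂ : r.obj (X₁⟦(1 : ℤ)⟧) ≅ Z₁⟦(1 : ℤ)⟧ :=
        (r.commShiftIso (1 : ℤ)).app X₁ ≪≫ (shiftFunctor D (1 : ℤ)).mapIso e₁ with hi₂
      obtain ⟨ε, hε⟩ := (hff X₂ (X₁⟦(1 : ℤ)⟧)).surjective (e₂.hom ≫ w ≫ i₂.inv)
      replace hε : r.map ε = e₂.hom ≫ w ≫ i₂.inv := hε
      obtain ⟨Q, q₁, q₂, memQ⟩ := Pretriangulated.distinguished_cocone_triangle ε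
      have hRQ := r.map_distinguished _ memQ
      have hrot2 := rot_of_distTriang _ (rot_of_distTriang _ mem)
      have hcomm : (r.mapTriangle.obj (Triangle.mk ε q₁ q₂)).mor₁ ≫ i₂.hom
          = e₂.hom ≫ ((Triangle.mk u v w).rotate.rotate).mor₁ := by
        dsimp [Triangle.rotate]
        change r.map ε ≫ i₂.hom = e₂.hom ≫ w; rw [hε]
        simp
      obtain ⟨c, hc₁, hc₂⟩ := Pretriangulated.complete_distinguished_triangle_morphism
        _ _ hRQ hrot2 e₂.hom i₂.hom hcomm
      let φ : r.mapTriangle.obj (Triangle.mk ε q₁ q₂) ⟶ (Triangle.mk u v w).rotate.rotate :=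
        { hom₁ := e₂.hom, hom₂ := i₂.hom, hom₃ := c,
          comm₁ := hcomm, comm₂ := hc₁, comm₃ := hc₂ }
      have hiso : IsIso c := by
        have := isIso₃_of_isIso₁₂ φ hRQ hrot2
          (by exact Iso.isIso_hom e₂) (by exact Iso.isIso_hom i₂)
        exact this
      -- c : r.obj Q ⟶ Z⟦1⟧ (up to defeq)
      refine ⟨Q⟦(-1 : ℤ)⟧, ⟨(r.commShiftIso (-1 : ℤ)).app Q ≪≫
        (shiftFunctor D (-1 : ℤ)).mapIso (@asIso _ _ _ _ c hiso) ≪≫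
        ((shiftFunctorCompIsoId D 1 (-1) (by omega)).app Z)⟩⟩
  haveI hEss : r.EssSurj := by
    refine ⟨fun Z => ?_⟩
    obtain ⟨a, b, h1, h2⟩ := hDbdd Z
    have hb : b ≤ a + ((b - a).toNat : ℤ) := by
      have := Int.self_le_toNat (b - a); omega
    exact mainD (b - a).toNat Z a h1 (tD.le_monotone hb _ h2)
  exact {}
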